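/- arXiv:2009.01947 — 4 statements merged into one kernel-verified Lean document; each statement's English description precedes it below -/
import Mathlib

section
/- Let f : 2^N → ℝ≥0 be submodular, O an optimal solution with f(O) = OPT, A, B ⊆ N disjoint subsets, and α ≥ 1, c > 0 real constants. Suppose (i) f(O ∪ A) − f(A) ≤ OPT/c, (ii) f((O \ A) ∪ B) − f(B) ≤ OPT/c, and (iii) f(O ∩ A) ≤ α·m where m := max{f(A), f(B), m'} for some m' ≥ 0 with α·m' ≥ f(O ∩ A). Then OPT ≤ (α + 2)·m + 2·OPT/c; in particular if c = 4 + α then m ≥ OPT/(4 + α). -/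
/-!
Split `O` along `A`: submodularity and `f ∅ ≥ 0` give `f O ≤ f (O ∩ A) + f (O \ A)`. Since `A` and
`B` are disjoint, `O \ A` is the intersection of `O ∪ A` and `(O \ A) ∪ B`, so again by submodularity
and nonnegativity `f (O \ A) ≤ f (O ∪ A) + f ((O \ A) ∪ B) ≤ f A + f B + 2 OPT / c`. Bounding
`f (O ∩ A)`, `f A`, `f B` by `α m`, `m`, `m` gives `OPT ≤ (α + 2) m + 2 OPT / c`.
-/

namespace Finset

variable {N : Type*} [DecidableEq N]

theorem union_inter_sdiff_union_of_disjoint {A B : Finset N} (hAB : Disjoint A B) (O : Finset N) :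
    (O ∪ A) ∩ (O \ A ∪ B) = O \ A := by
  ext x
  have : x ∈ A → x ∉ B := fun hA => disjoint_left.mp hAB hA
  simp only [mem_inter, mem_union, mem_sdiff]
  tauto

variable {f : Finset N → ℝ}

theorem union_le_add_of_submodular (hsub : ∀ X Y : Finset N, f X + f Y ≥ f (X ∪ Y) + f (X ∩ Y))
    (hnn : ∀ S : Finset N, 0 ≤ f S) (X Y : Finset N) : f (X ∪ Y) ≤ f X + f Y := by
  linarith [hsub X Y, hnn (X ∩ Y)]

theorem inter_le_add_of_submodular (hsub : ∀ X Y : Finset N, f X + f Y ≥ f (X ∪ Y) + f (X ∩ Y))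
    (hnn : ∀ S : Finset N, 0 ≤ f S) (X Y : Finset N) : f (X ∩ Y) ≤ f X + f Y := by
  linarith [hsub X Y, hnn (X ∪ Y)]

end Finset

theorem div_le_of_le_mul_add_two_mul_div {x m α : ℝ} (hα : -2 < α)
    (h : x ≤ (α + 2) * m + 2 * x / (4 + α)) : x / (4 + α) ≤ m := by
  have h4 : 4 + α ≠ 0 := by linarith
  have hx : x = (α + 2) * (x / (4 + α)) + 2 * x / (4 + α) := by
    field_simp
    ring
  exact le_of_mul_le_mul_left (by linarith) (by linarith : 0 < α + 2)

theorem stmt_4_general {N : Type*} [DecidableEq N] (f : Finset N → ℝ)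
    (hsub : ∀ A B : Finset N, f A + f B ≥ f (A ∪ B) + f (A ∩ B))
    (hnn : ∀ S : Finset N, 0 ≤ f S)
    (O A B : Finset N) (hdisj : A ∩ B = ∅)
    (OPT : ℝ) (hOPT : OPT = f O)
    (α c : ℝ) (hα : 1 ≤ α)
    (m' : ℝ)
    (m : ℝ) (hm : m = max (max (f A) (f B)) m')
    (h1 : f (O ∪ A) - f A ≤ OPT / c)
    (h2 : f ((O \ A) ∪ B) - f B ≤ OPT / c)
    (h3 : f (O ∩ A) ≤ α * m')
    : OPT ≤ (α + 2) * m + 2 * OPT / c ∧ (c = 4 + α → m ≥ OPT / (4 + α)) := by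
  have hsplit : OPT ≤ f (O \ A) + f (O ∩ A) := by
    rw [hOPT]
    conv_lhs => rw [← Finset.sdiff_union_inter O A]
    exact Finset.union_le_add_of_submodular hsub hnn _ _
  have hdiff : f (O \ A) ≤ f (O ∪ A) + f (O \ A ∪ B) := by
    have := Finset.inter_le_add_of_submodular hsub hnn (O ∪ A) (O \ A ∪ B)
    rwa [Finset.union_inter_sdiff_union_of_disjoint
      (Finset.disjoint_iff_inter_eq_empty.mpr hdisj)] at this
  have hfA : f A ≤ m := hm ▸ le_max_of_le_left (le_max_left _ _)
  have hfB : f B ≤ m := hm ▸ le_max_of_le_left (le_max_right _ _)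
  have hαm : α * m' ≤ α * m :=
    mul_le_mul_of_nonneg_left (hm ▸ le_max_right _ _) (by linarith)
  have hmain : OPT ≤ (α + 2) * m + 2 * OPT / c := by
    have hdouble : 2 * OPT / c = OPT / c + OPT / c := by ring
    linarith
  refine ⟨hmain, fun hc => ?_⟩
  subst hc
  exact div_le_of_le_mul_add_two_mul_div (by linarith) hmain

theorem stmt_4 {N : Type*} [Fintype N] [DecidableEq N] (f : Finset N → ℝ)
    (hsub : ∀ A B : Finset N, f A + f B ≥ f (A ∪ B) + f (A ∩ B))
    (hnn : ∀ S : Finset N, 0 ≤ f S)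
    (O A B : Finset N) (hdisj : A ∩ B = ∅)
    (OPT : ℝ) (hOPT : OPT = f O)
    (α c : ℝ) (hα : 1 ≤ α) (hc : 0 < c)
    (m' : ℝ) (hm' : 0 ≤ m')
    (m : ℝ) (hm : m = max (max (f A) (f B)) m')
    (h1 : f (O ∪ A) - f A ≤ OPT / c)
    (h2 : f ((O \ A) ∪ B) - f B ≤ OPT / c)
    (h3 : f (O ∩ A) ≤ α * m')
    : OPT ≤ (α + 2) * m + 2 * OPT / c ∧ (c = 4 + α → m ≥ OPT / (4 + α)) :=
  stmt_4_general f hsub hnn O A B hdisj OPT hOPT α c hα m' m hm h1 h2 h3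
end

section
/- Let η ∈ (0,1), set c = 8/η, ε = (1 − 1/e)·η/8, and β = 1 − e^{−(1−ε)²}. Then (1 − 2/(c·(1−ε)²)) / (1/α + 2/β) ≥ α·(e−1)/(e − 1 + 2·e·α) − η, where α ≥ 1 is a fixed real (in the application α = 2). -/
/-!
Write `F b = 1 / (1/α + 2/b) = α b / (b + 2α)`, so the claimed bound is
`(1 - η/(4x)) F(β) ≥ F(1 - 1/e) - η` with `x = (1 - ε)²` and `β = 1 - e^{-x}`.
Since `F b ≤ b/2 ≤ 1/2`, the factor `1 - η/(4x)` costs at most `η/(8x)`; since `F` is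
`1/2`-Lipschitz and `e^{-x} - e^{-1} ≤ 1 - x ≤ 2ε ≤ η/4`, replacing `β` by `1 - 1/e` costs at
most `η/8`. With `x ≥ 3/4` both losses together stay below `η`.
-/

open Real

lemma exp_neg_sub_exp_neg_one_le {x : ℝ} (hx0 : 0 ≤ x) (hx1 : x ≤ 1) :
    exp (-x) - exp (-1) ≤ 1 - x := by
  have hx : x ≤ exp (x - 1) := by linarith [add_one_le_exp (x - 1)]
  have hprod : exp (-x) * exp (x - 1) = exp (-1) := by rw [← exp_add]; ring_nf
  nlinarith [exp_pos (-x), exp_le_one_iff.mpr (neg_nonpos.mpr hx0)]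

section InvAddTwoDiv

variable {α b b₀ : ℝ}

lemma one_div_inv_add_two_div_eq (hα : 0 < α) (hb : 0 < b) :
    1 / (1 / α + 2 / b) = α * b / (b + 2 * α) := by
  field_simp

lemma one_div_inv_add_two_div_le (hα : 0 < α) (hb : 0 < b) :
    1 / (1 / α + 2 / b) ≤ b / 2 := by
  rw [one_div_inv_add_two_div_eq hα hb, div_le_div_iff₀ (by positivity) two_pos]
  nlinarith

lemma one_div_inv_add_two_div_sub_le (hα : 0 < α) (hb : 0 < b) (hbb₀ : b ≤ b₀) :
    1 / (1 / α + 2 / b₀) - 1 / (1 / α + 2 / b) ≤ (b₀ - b) / 2 := by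
  have hb₀ : 0 < b₀ := hb.trans_le hbb₀
  rw [one_div_inv_add_two_div_eq hα hb, one_div_inv_add_two_div_eq hα hb₀,
    div_sub_div _ _ (by positivity) (by positivity), div_le_div_iff₀ (by positivity) two_pos]
  nlinarith [mul_nonneg (sub_nonneg.mpr hbb₀) (by positivity : 0 ≤ b * b₀ + 2 * α * (b + b₀))]

lemma one_div_inv_add_two_div_sub_le_of_near_one {η x : ℝ} (hα : 0 < α) (hη0 : 0 ≤ η)
    (hη1 : η ≤ 1) (hx : 1 - η / 4 ≤ x) (hx1 : x ≤ 1) :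
    1 / (1 / α + 2 / (1 - exp (-1))) - η ≤
      (1 - η / (4 * x)) / (1 / α + 2 / (1 - exp (-x))) := by
  have hx0 : 0 < x := by linarith
  have hβ : 0 < 1 - exp (-x) := by linarith [exp_lt_one_iff.mpr (neg_lt_zero.mpr hx0)]
  have hββ₀ : 1 - exp (-x) ≤ 1 - exp (-1) := by linarith [exp_le_exp.mpr (neg_le_neg hx1)]
  have hF : 1 / (1 / α + 2 / (1 - exp (-x))) ≤ 1 / 2 := by
    linarith [one_div_inv_add_two_div_le hα hβ, exp_pos (-x)]
  have hFF₀ := one_div_inv_add_two_div_sub_le hα hβ hββ₀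
  have hηx : η / (4 * x) ≤ η / 3 := by
    rw [div_le_iff₀ (by positivity)]; nlinarith
  rw [sub_div, div_eq_mul_one_div (η / (4 * x))]
  nlinarith [exp_neg_sub_exp_neg_one_le hx0.le hx1,
    mul_le_mul_of_nonneg_left hF (by positivity : 0 ≤ η / (4 * x))]

end InvAddTwoDiv

theorem stmt_10 (η α : ℝ) (hη0 : 0 < η) (hη1 : η < 1) (hα : 1 ≤ α)
    (c ε β : ℝ) (hc : c = 8 / η)
    (hε : ε = (1 - 1 / Real.exp 1) * η / 8)
    (hβ : β = 1 - Real.exp (-(1 - ε) ^ 2)) :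
    (1 - 2 / (c * (1 - ε) ^ 2)) / (1 / α + 2 / β) ≥
      α * (Real.exp 1 - 1) / (Real.exp 1 - 1 + 2 * Real.exp 1 * α) - η := by
  have he : 1 < exp 1 := one_lt_exp_iff.mpr one_pos
  have hε0 : 0 ≤ ε := by rw [hε]; field_simp; nlinarith
  have hεη : ε ≤ η / 8 := by rw [hε]; field_simp; nlinarith
  have hRHS : α * (exp 1 - 1) / (exp 1 - 1 + 2 * exp 1 * α) =
      1 / (1 / α + 2 / (1 - exp (-1))) := by
    have : exp 1 - 1 ≠ 0 := (sub_pos.mpr he).ne'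
    rw [exp_neg]
    field_simp
  have hcx : 2 / (c * (1 - ε) ^ 2) = η / (4 * (1 - ε) ^ 2) := by
    rw [hc]; field_simp; ring
  rw [ge_iff_le, hRHS, hcx, hβ]
  exact one_div_inv_add_two_div_sub_le_of_near_one (by linarith) hη0.le hη1.le
    (by nlinarith) (by nlinarith)
end

section
/- Let λ = 1 − 1/e and η ∈ (0,1). Then λ·η/4 ≤ 1 − log((2 + λη/2)/(λη/2 + 2 − 2λ)), where log denotes the natural logarithm. -/
theorem stmt_13 (η : ℝ) (hη0 : 0 < η) (hη1 : η < 1)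
    (lam : ℝ) (hlam : lam = 1 - 1 / Real.exp 1) :
    lam * η / 4 ≤ 1 - Real.log ((2 + lam * η / 2) / (lam * η / 2 + 2 - 2 * lam)) := by
  have he1 : (2.7182818283 : ℝ) < Real.exp 1 := Real.exp_one_gt_d9
  have he2 : Real.exp 1 < 2.7182818286 := Real.exp_one_lt_d9
  set e := Real.exp 1 with hE
  have hepos : (0:ℝ) < e := by linarith
  have hinv1 : 1 / e < 1 := by rw [div_lt_one hepos]; linarith
  have hinv0 : 0 < 1 / e := by positivity
  have hlam0 : 0 < lam := by rw [hlam]; linarith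
  have hlam1 : lam < 1 := by rw [hlam]; linarith
  set t := lam * η / 2 with ht
  have ht0 : 0 < t := by positivity
  have htlt : t < lam / 2 := by
    rw [ht]
    have : lam * η < lam * 1 := by nlinarith
    linarith
  have hd : lam * η / 2 + 2 - 2 * lam = t + 2 / e := by
    rw [ht, hlam]; ring
  have hdpos : 0 < t + 2 / e := by positivity
  set r := (2 + t) / (t + 2 / e) with hr
  have hrpos : 0 < r := by positivity
  have hlogr : Real.log r ≤ r / e := by
    have h1 : Real.log (r / e) ≤ r / e - 1 :=
      Real.log_le_sub_one_of_pos (by positivity)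
    have h2 : Real.log (r / e) = Real.log r - 1 := by
      rw [Real.log_div (ne_of_gt hrpos) (ne_of_gt hepos), hE, Real.log_exp]
    linarith
  have hkey : r / e ≤ 1 - t / 2 := by
    rw [div_le_iff₀ hepos] at *
    rw [hr, div_le_iff₀ hdpos]
    have hed : e * (2 / e) = 2 := by field_simp
    have he4 : e * (4 / e) = 4 := by field_simp
    have hinv37 : 1 / e < 0.37 := by
      rw [div_lt_iff₀ hepos]; nlinarith
    have hinv4 : 4 / e < 1.48 := by
      rw [div_lt_iff₀ hepos]; nlinarith
    have hbound : t < 2 - 4 / e := by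
      rw [hlam] at htlt; linarith
    have h3 : e * t < 2 * e - 4 := by nlinarith [mul_lt_mul_of_pos_left hbound hepos]
    have h5 : 0 < 2 * e - 4 - e * t := by linarith
    nlinarith [mul_pos h5 ht0, hed]
  have : Real.log r ≤ 1 - t / 2 := le_trans hlogr hkey
  rw [hd]
  have : lam * η / 4 = t / 2 := by rw [ht]; ring
  linarith
end

section
/- Let f : 2^N → ℝ be submodular on a finite set N and k a positive integer. Let O ⊆ N with |O| ≤ k, and let A_i, B_i be nested increasing sequences of subsets with A_i ∩ B_i = ∅ for all i, built element by element (A_{i+1} = A_i ∪ {a_i}, B_{i+1} = B_i ∪ {b_i}). Suppose for each i: f(A_{i+1}) − f(A_i) ≥ (1/k)·∑_{o ∈ O} f_o(A_i) and f(B_{i+1}) − f(B_i) ≥ (1/k)·∑_{o ∈ O \ A} f_o(B_i), where A = A_k ∪ {a_k}. If additionally f is nonnegative, then f(A_{i+1}) + f(B_{i+1}) − f(A_i) − f(B_i) ≥ (1/k)·(f(O \ A) − f(A_i) − f(B_i)). -/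
private lemma marg_sum {N : Type*} [DecidableEq N] (f : Finset N → ℝ)
    (hsub : ∀ A B : Finset N, f A + f B ≥ f (A ∪ B) + f (A ∩ B))
    (T S : Finset N) :
    f (S ∪ T) - f S ≤ ∑ o ∈ T, (f (insert o S) - f S) := by
  induction T using Finset.induction with
  | empty => simp
  | @insert x T' hx ih =>
    rw [Finset.sum_insert hx]
    have h1 := hsub (insert x S) (S ∪ T')
    have e1 : insert x S ∪ (S ∪ T') = insert x (S ∪ T') := by
      ext y; simp only [Finset.mem_union, Finset.mem_insert]; tauto
    have e2 : insert x S ∩ (S ∪ T') = S := by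
      ext y; simp only [Finset.mem_inter, Finset.mem_insert, Finset.mem_union]
      constructor
      · rintro ⟨h | h, h2 | h2⟩ <;> try assumption
        · subst h; exact absurd h2 hx
      · intro h; exact ⟨Or.inr h, Or.inl h⟩
    have e3 : S ∪ insert x T' = insert x (S ∪ T') := by
      ext y; simp only [Finset.mem_union, Finset.mem_insert]; tauto
    rw [e1, e2] at h1
    rw [e3]
    linarith

theorem stmt_16 {N : Type*} [Fintype N] [DecidableEq N] (f : Finset N → ℝ)
    (hsub : ∀ A B : Finset N, f A + f B ≥ f (A ∪ B) + f (A ∩ B))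
    (hnn : ∀ S : Finset N, 0 ≤ f S)
    (k : ℕ) (hk : 0 < k) (O : Finset N) (hO : O.card ≤ k)
    (a b : ℕ → N) (A B : ℕ → Finset N)
    (hA : ∀ i : ℕ, A (i + 1) = insert (a i) (A i))
    (hB : ∀ i : ℕ, B (i + 1) = insert (b i) (B i))
    (hdisj : ∀ i : ℕ, A i ∩ B i = ∅)
    (hgainA : ∀ i ≤ k, f (A (i + 1)) - f (A i) ≥
      (1 / k) * ∑ o ∈ O, (f (insert o (A i)) - f (A i)))
    (hgainB : ∀ i ≤ k, f (B (i + 1)) - f (B i) ≥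
      (1 / k) * ∑ o ∈ O \ A (k + 1), (f (insert o (B i)) - f (B i))) :
    ∀ i ≤ k, f (A (i + 1)) + f (B (i + 1)) - f (A i) - f (B i) ≥
      (1 / k) * (f (O \ A (k + 1)) - f (A i) - f (B i)) := by
  have hAmono : ∀ i j : ℕ, i ≤ j → A i ⊆ A j := by
    intro i j hij
    induction j with
    | zero => simp_all
    | succ n ih =>
      rcases Nat.lt_or_ge i (n+1) with h | h
      · exact (ih (Nat.lt_succ_iff.mp h)).trans (by rw [hA n]; exact Finset.subset_insert _ _)
      · have : i = n + 1 := le_antisymm hij h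
        subst this; rfl
  have hBmono : ∀ i j : ℕ, i ≤ j → B i ⊆ B j := by
    intro i j hij
    induction j with
    | zero => simp_all
    | succ n ih =>
      rcases Nat.lt_or_ge i (n+1) with h | h
      · exact (ih (Nat.lt_succ_iff.mp h)).trans (by rw [hB n]; exact Finset.subset_insert _ _)
      · have : i = n + 1 := le_antisymm hij h
        subst this; rfl
  intro i hi
  have hki : (0:ℝ) < k := by exact_mod_cast hk
  have hinv : (0:ℝ) ≤ 1 / k := by positivity
  -- A side
  have hA1 : f (A (i+1)) - f (A i) ≥ (1/k) * (f (A i ∪ O) - f (A i)) := by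
    have := marg_sum f hsub O (A i)
    have := mul_le_mul_of_nonneg_left this hinv
    have hg := hgainA i hi
    linarith
  have hB1 : f (B (i+1)) - f (B i) ≥ (1/k) * (f (B i ∪ (O \ A (k+1))) - f (B i)) := by
    have := marg_sum f hsub (O \ A (k+1)) (B i)
    have := mul_le_mul_of_nonneg_left this hinv
    have hg := hgainB i hi
    linarith
  -- intersection computation
  have hsubA : A i ⊆ A (k+1) := hAmono i (k+1) (by omega)
  have hsubB : B i ⊆ B (k+1) := hBmono i (k+1) (by omega)
  have hdk : A (k+1) ∩ B (k+1) = ∅ := hdisj (k+1)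
  have hint : (A i ∪ O) ∩ (B i ∪ (O \ A (k+1))) = O \ A (k+1) := by
    ext x
    simp only [Finset.mem_inter, Finset.mem_union, Finset.mem_sdiff]
    constructor
    · rintro ⟨h1, h2⟩
      rcases h2 with h2 | h2
      · rcases h1 with h1 | h1
        · exfalso
          have : x ∈ A (k+1) ∩ B (k+1) := Finset.mem_inter.mpr ⟨hsubA h1, hsubB h2⟩
          simp [hdk] at this
        · refine ⟨h1, fun hx => ?_⟩
          have : x ∈ A (k+1) ∩ B (k+1) := Finset.mem_inter.mpr ⟨hx, hsubB h2⟩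
          simp [hdk] at this
      · exact h2
    · intro h
      exact ⟨Or.inr h.1, Or.inr h⟩
  have hkey : f (A i ∪ O) + f (B i ∪ (O \ A (k+1))) ≥ f (O \ A (k+1)) := by
    have h1 := hsub (A i ∪ O) (B i ∪ (O \ A (k+1)))
    rw [hint] at h1
    have h2 := hnn ((A i ∪ O) ∪ (B i ∪ (O \ A (k+1))))
    linarith
  nlinarith [mul_le_mul_of_nonneg_left hkey.le hinv]
end
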